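/- If the aggregate excess demand z satisfies gross substitutes, homogeneity of degree zero, and Walras' law, and P* is an equilibrium price (z(P*)=0), then for any price vector P not proportional to P*, we have P*·z(P) > 0. -/

import Mathlib

open Finset

/-- Positivity of a price vector. -/
def PosPrice {M : ℕ} (P : Fin M → ℝ) : Prop := ∀ m, 0 < P m

/-!
Write `r m = P m / P* m` and let `ρ` be its maximum. For `t < ρ` the prices `t • P*` are an
equilibrium, and `Q = P ⊔ t • P*` is obtained from them by raising prices; by gross substitutes
every good with `r m ≤ t` is in excess demand at `Q`, so by Walras' law the remaining goods have
negative value of excess demand at `Q`, and even more so at `P`. Hence `P` gives positive value of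
excess demand to each sublevel set `{r ≤ t}`, and Abel summation of
`P* · z(P) = ∑ P m z_m(P) (1 / r m - 1 / ρ)` over the levels of `r` makes it positive.
-/

theorem Finset.sum_mul_pos_of_sublevel_sums_pos {ι α : Type*} [LinearOrder α] (s : Finset ι)
    (r : ι → α) (c w : ι → ℝ)
    (hw : ∀ i ∈ s, ∀ j ∈ s, r i ≤ r j → w j ≤ w i) (hw₀ : ∀ i ∈ s, 0 ≤ w i)
    (hc : ∀ k ∈ s, 0 < w k → 0 < ∑ m ∈ s with r m ≤ r k, c m) :
    (∃ k ∈ s, 0 < w k) → 0 < ∑ m ∈ s, c m * w m := by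
  classical
  induction s using Finset.induction_on_max_value r generalizing w with
  | empty => simp
  | insert a s ha hmax ih =>
    -- peel off the element `a` of largest `r` and shift all weights down by `w a`
    rintro ⟨k, hk, hwk⟩
    have hrest : ∀ i ∈ s, 0 < w i - w a → r i < r a ∧ 0 < w i := fun i hi hi' =>
      ⟨lt_of_not_ge fun h => by linarith [hw a (mem_insert_self a s) i (mem_insert_of_mem hi) h],
        by linarith [hw₀ a (mem_insert_self a s)]⟩
    have ih' := ih (fun i => w i - w a)
      (fun i hi j hj hij => by linarith [hw i (mem_insert_of_mem hi) j (mem_insert_of_mem hj) hij])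
      (fun i hi => by linarith [hw i (mem_insert_of_mem hi) a (mem_insert_self a s) (hmax i hi)])
      (fun i hi hi' => by
        obtain ⟨hlt, hwi⟩ := hrest i hi hi'
        simpa [filter_insert, not_le.mpr hlt] using hc i (mem_insert_of_mem hi) hwi)
    have hlower : 0 ≤ ∑ m ∈ s, c m * (w m - w a) := by
      by_cases h : ∃ i ∈ s, 0 < w i - w a
      · exact (ih' h).le
      · push Not at h
        refine (sum_eq_zero fun i hi => ?_).ge
        have hwi := hw i (mem_insert_of_mem hi) a (mem_insert_self a s) (hmax i hi)
        rw [show w i - w a = 0 by linarith [h i hi, hwi], mul_zero]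
    have hsplit : ∑ m ∈ insert a s, c m * w m
        = ∑ m ∈ s, c m * (w m - w a) + w a * ∑ m ∈ insert a s, c m := by
      simp only [sum_insert ha, mul_sub, sum_sub_distrib, mul_add, ← sum_mul]
      ring
    rw [hsplit]
    rcases (hw₀ a (mem_insert_self a s)).lt_or_eq with hwa | hwa
    · have htotal := hc a (mem_insert_self a s) hwa
      rw [filter_true_of_mem fun i hi => ?_] at htotal
      · exact add_pos_of_nonneg_of_pos hlower (mul_pos hwa htotal)
      · rcases mem_insert.mp hi with rfl | hi
        exacts [le_rfl, hmax i hi]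
    · rcases mem_insert.mp hk with rfl | hk
      · exact absurd hwa hwk.ne
      · simpa [← hwa] using ih' ⟨k, hk, by linarith⟩

def GrossSubstitutes {M : ℕ} (z : (Fin M → ℝ) → Fin M → ℝ) : Prop :=
  ∀ P P' : Fin M → ℝ, PosPrice P → PosPrice P' →
    ∀ k : Fin M, P k < P' k → (∀ m, m ≠ k → P' m = P m) →
    ∀ m, m ≠ k → z P m < z P' m

def WalrasLaw {M : ℕ} (z : (Fin M → ℝ) → Fin M → ℝ) : Prop :=
  ∀ P : Fin M → ℝ, PosPrice P → ∑ m, P m * z P m = 0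

section

variable {M : ℕ} {z : (Fin M → ℝ) → Fin M → ℝ}

theorem GrossSubstitutes.lt_of_le_of_ne (hgs : GrossSubstitutes z) {Q Q' : Fin M → ℝ}
    (hQ : PosPrice Q) (hQ' : PosPrice Q') (hle : Q ≤ Q') (hne : Q ≠ Q') {j : Fin M}
    (hj : Q j = Q' j) : z Q j < z Q' j := by
  classical
  -- raise the prices of the goods in `D` one at a time
  suffices h : ∀ D : Finset (Fin M), ∀ Q, PosPrice Q → Q ≤ Q' → Q ≠ Q' → Q j = Q' j →
      (∀ i ∉ D, Q i = Q' i) → z Q j < z Q' j from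
    h univ Q hQ hle hne hj fun i hi => absurd (mem_univ i) hi
  intro D
  induction D using Finset.induction_on with
  | empty => exact fun Q _ _ hne _ hout => absurd (funext fun i => hout i (notMem_empty i)) hne
  | insert i D _ ih =>
    intro Q hQ hle hne hj hout
    have hout' : ∀ Q₀ : Fin M → ℝ, Q₀ i = Q' i → (∀ m, m ≠ i → Q₀ m = Q m) →
        ∀ m ∉ D, Q₀ m = Q' m := fun Q₀ hi hQ₀ m hm => by
      rcases eq_or_ne m i with rfl | hmi
      exacts [hi, (hQ₀ m hmi).trans (hout m (by simp [hmi, hm]))]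
    rcases (hle i).lt_or_eq with hlt | heq
    · set Q'' := Function.update Q i (Q' i)
      have hji : j ≠ i := by rintro rfl; exact hlt.ne hj
      have hQ'' : PosPrice Q'' := fun m => by
        rcases eq_or_ne m i with rfl | hm
        exacts [by simpa [Q''] using hQ' m, by simpa [Q'', hm] using hQ m]
      have hle'' : Q'' ≤ Q' := fun m => by
        rcases eq_or_ne m i with rfl | hm
        exacts [by simp [Q''], by simpa [Q'', hm] using hle m]
      have hstep : z Q j < z Q'' j :=
        hgs Q Q'' hQ hQ'' i (by simpa [Q''] using hlt) (fun m hm => by simp [Q'', hm]) j hji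
      rcases eq_or_ne Q'' Q' with hQQ | hQQ
      · exact hQQ ▸ hstep
      · exact hstep.trans (ih Q'' hQ'' hle'' hQQ (by simpa [Q'', hji] using hj)
          (hout' Q'' (by simp [Q'']) fun m hm => by simp [Q'', hm]))
    · exact ih Q hQ hle hne hj (hout' Q heq fun _ _ => rfl)

theorem GrossSubstitutes.le_of_le (hgs : GrossSubstitutes z) {Q Q' : Fin M → ℝ}
    (hQ : PosPrice Q) (hQ' : PosPrice Q') (hle : Q ≤ Q') {j : Fin M} (hj : Q j = Q' j) :
    z Q j ≤ z Q' j := by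
  rcases eq_or_ne Q Q' with rfl | hne
  exacts [le_rfl, (hgs.lt_of_le_of_ne hQ hQ' hle hne hj).le]

theorem WalrasLaw.sum_sublevel_pos (hw : WalrasLaw z) (hgs : GrossSubstitutes z)
    {P E : Fin M → ℝ} (hP : PosPrice P) (hE : PosPrice E) (hzE : z E = 0) {ℓ k : Fin M}
    (hℓ : E ℓ < P ℓ) (hk : P k ≤ E k) :
    0 < ∑ m with P m ≤ E m, P m * z P m := by
  -- `Q` agrees with `E` on the sublevel set `{P ≤ E}` and with `P` off it
  set Q := P ⊔ E
  have hQ : PosPrice Q := fun m => (hP m).trans_le le_sup_left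
  have hEQ : E ≠ Q := fun h => (lt_sup_of_lt_left hℓ).ne (congrFun h ℓ)
  have hzQ_pos : ∀ m, P m ≤ E m → 0 < z Q m := fun m hm => by
    simpa [hzE] using hgs.lt_of_le_of_ne hE hQ le_sup_right hEQ (sup_of_le_right hm).symm
  have hzQ_ge : ∀ m, ¬ P m ≤ E m → z P m ≤ z Q m := fun m hm =>
    hgs.le_of_le hP hQ le_sup_left (sup_of_le_left (le_of_not_ge hm)).symm
  have hlow : 0 < ∑ m with P m ≤ E m, Q m * z Q m :=
    sum_pos (fun m hm => mul_pos (hQ m) (hzQ_pos m (mem_filter.mp hm).2)) ⟨k, by simp [hk]⟩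
  have hhigh : ∑ m with ¬ P m ≤ E m, P m * z P m ≤ ∑ m with ¬ P m ≤ E m, Q m * z Q m :=
    sum_le_sum fun m hm => by
      have hm := (mem_filter.mp hm).2
      rw [show Q m = P m from sup_of_le_left (le_of_not_ge hm)]
      exact mul_le_mul_of_nonneg_left (hzQ_ge m hm) (hP m).le
  have hwQ := hw Q hQ
  have hwP := hw P hP
  rw [← sum_filter_add_sum_filter_not univ (fun m => P m ≤ E m)] at hwQ hwP
  linarith

theorem WalrasLaw.sum_ratio_sublevel_pos (hw : WalrasLaw z) (hgs : GrossSubstitutes z)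
    {P Pstar : Fin M → ℝ} (hP : PosPrice P) (hPstar : PosPrice Pstar)
    (hray : ∀ t : ℝ, 0 < t → z (t • Pstar) = 0) {k ℓ : Fin M}
    (hkℓ : P k / Pstar k < P ℓ / Pstar ℓ) :
    0 < ∑ m with P m / Pstar m ≤ P k / Pstar k, P m * z P m := by
  set t := P k / Pstar k
  have ht : 0 < t := div_pos (hP k) (hPstar k)
  have hE : PosPrice (t • Pstar) := fun m => mul_pos ht (hPstar m)
  convert hw.sum_sublevel_pos hgs hP hE (hray t ht) (ℓ := ℓ) (k := k) ?_ ?_ using 2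
  · ext m
    simp [div_le_iff₀ (hPstar m)]
  · simpa [lt_div_iff₀ (hPstar ℓ)] using hkℓ
  · simp [t, div_mul_cancel₀ _ (hPstar k).ne']

end

theorem equilibrium_value_of_excess_demand_pos_general
    (M : ℕ) (z : (Fin M → ℝ) → Fin M → ℝ)
    (hhom : ∀ P : Fin M → ℝ, PosPrice P → ∀ lam : ℝ, 0 < lam →
        z (lam • P) = z P)
    (hwalras : ∀ P : Fin M → ℝ, PosPrice P → ∑ m, P m * z P m = 0)
    (hgs : ∀ P P' : Fin M → ℝ, PosPrice P → PosPrice P' →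
        ∀ k : Fin M, P k < P' k → (∀ m, m ≠ k → P' m = P m) →
        ∀ m, m ≠ k → z P m < z P' m)
    (Pstar : Fin M → ℝ) (hPstar : PosPrice Pstar) (heq : z Pstar = 0)
    (P : Fin M → ℝ) (hP : PosPrice P)
    (hnotprop : ∀ lam : ℝ, P ≠ lam • Pstar) :
    0 < ∑ m, Pstar m * z P m := by
  set r : Fin M → ℝ := fun m => P m / Pstar m
  have hr : ∀ m, 0 < r m := fun m => div_pos (hP m) (hPstar m)
  have : Nonempty (Fin M) := by
    by_contra h
    exact hnotprop 0 (funext fun m => (not_nonempty_iff.mp h).elim m)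
  obtain ⟨ℓ, hℓ⟩ := Finite.exists_max r
  obtain ⟨k₀, hk₀⟩ : ∃ k, r k < r ℓ := by
    by_contra! h
    refine hnotprop (r ℓ) (funext fun m => ?_)
    simp [← le_antisymm (hℓ m) (h m), r, div_mul_cancel₀ _ (hPstar m).ne']
  set w : Fin M → ℝ := fun m => 1 / r m - 1 / r ℓ
  have hsum_pos : 0 < ∑ m, P m * z P m * w m :=
    sum_mul_pos_of_sublevel_sums_pos univ r _ w
      (fun i _ j _ hij => sub_le_sub_right (one_div_le_one_div_of_le (hr i) hij) _)
      (fun i _ => sub_nonneg.mpr (one_div_le_one_div_of_le (hr i) (hℓ i)))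
      (fun k _ hk => WalrasLaw.sum_ratio_sublevel_pos hwalras hgs hP hPstar
        (fun t ht => (hhom Pstar hPstar t ht).trans heq)
        ((hℓ k).lt_of_ne fun h => by simp [w, h] at hk))
      ⟨k₀, mem_univ _, sub_pos.mpr (one_div_lt_one_div_of_lt (hr k₀) hk₀)⟩
  calc (0 : ℝ) < ∑ m, P m * z P m * w m := hsum_pos
    _ = ∑ m, Pstar m * z P m - (r ℓ)⁻¹ * ∑ m, P m * z P m := by
      rw [mul_sum, ← sum_sub_distrib]
      refine sum_congr rfl fun m _ => ?_
      simp only [w, r]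
      field_simp [(hP m).ne', (hPstar m).ne']
    _ = ∑ m, Pstar m * z P m := by rw [hwalras P hP, mul_zero, sub_zero]

/-- under gross substitutes, homogeneity of degree zero,
continuity and Walras' law, if `P*` is an equilibrium price and `P` is not
proportional to `P*`, then `P*·z(P) > 0`. -/
theorem equilibrium_value_of_excess_demand_pos
    (M : ℕ) (z : (Fin M → ℝ) → Fin M → ℝ)
    (hcont : ContinuousOn z {P | PosPrice P})
    (hhom : ∀ P : Fin M → ℝ, PosPrice P → ∀ lam : ℝ, 0 < lam →
        z (lam • P) = z P)
    (hwalras : ∀ P : Fin M → ℝ, PosPrice P → ∑ m, P m * z P m = 0)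
    (hgs : ∀ P P' : Fin M → ℝ, PosPrice P → PosPrice P' →
        ∀ k : Fin M, P k < P' k → (∀ m, m ≠ k → P' m = P m) →
        ∀ m, m ≠ k → z P m < z P' m)
    (Pstar : Fin M → ℝ) (hPstar : PosPrice Pstar) (heq : z Pstar = 0)
    (P : Fin M → ℝ) (hP : PosPrice P)
    (hnotprop : ∀ lam : ℝ, P ≠ lam • Pstar) :
    0 < ∑ m, Pstar m * z P m :=
  equilibrium_value_of_excess_demand_pos_general M z hhom hwalras hgs Pstar hPstar heq P hP hnotprop
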